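/- arXiv:1609.06760 — 2 statements merged into one kernel-verified Lean document; each statement's English description precedes it below -/
import Mathlib

section
/- If two staircase Young diagrams ∂^a and ∂^b (a, b ∈ ℕ) are domino-equivalent, then a = b. In particular, distinct 2-cores are not domino-equivalent. -/
namespace PeriplecticPaper

/-- The content of a cell `(i, j)` (row `i`, column `j`) is `j - i`. -/
def content (c : ℕ × ℕ) : ℤ := (c.2 : ℤ) - (c.1 : ℤ)

/-- `gamma μ` is the number of cells of `μ` with even content minus the number of
cells of `μ` with odd content. -/
def gamma (μ : YoungDiagram) : ℤ :=
  ((μ.cells.filter fun c => Even (content c)).card : ℤ) -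
    ((μ.cells.filter fun c => ¬ Even (content c)).card : ℤ)

/-- `AddDomino μ lam` means the Young diagram `lam` is obtained from `μ` by adding a
domino: `μ ⊆ lam` and `lam \ μ` consists of exactly two cells, which are of the form
`(i, j), (i, j+1)` or of the form `(i, j), (i+1, j)`. -/
def AddDomino (μ lam : YoungDiagram) : Prop :=
  μ.cells ⊆ lam.cells ∧
    ∃ i j : ℕ,
      lam.cells \ μ.cells = {(i, j), (i, j + 1)} ∨
      lam.cells \ μ.cells = {(i, j), (i + 1, j)}

/-- Two Young diagrams are domino-equivalent (have the same 2-core) if they are related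
by the equivalence relation generated by adding a domino. -/
def DominoEquiv : YoungDiagram → YoungDiagram → Prop :=
  Relation.EqvGen AddDomino

/-- The staircase Young diagram `∂^m`, with cells `{(i, j) : i + j ≤ m - 1}`,
i.e. with row lengths `(m, m-1, …, 1)`. -/
def staircase (m : ℕ) : YoungDiagram where
  cells := (Finset.range m ×ˢ Finset.range m).filter fun c => c.1 + c.2 < m
  isLowerSet := by
    intro c1 c2 h hc2
    simp only [Finset.coe_filter, Set.mem_setOf_eq, Finset.mem_product,
      Finset.mem_range] at hc2 ⊢
    have h1 := h.1
    have h2 := h.2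
    omega

lemma filter_pair_card (x y : ℕ × ℕ)
    (hp : Even (content x) ↔ ¬ Even (content y)) :
    (({x, y} : Finset (ℕ × ℕ)).filter fun c => Even (content c)).card = 1 ∧
    (({x, y} : Finset (ℕ × ℕ)).filter fun c => ¬ Even (content c)).card = 1 := by
  have hxy : x ≠ y := by rintro rfl; tauto
  by_cases hx : Even (content x)
  · have hy : ¬ Even (content y) := hp.mp hx
    rw [Finset.filter_insert, Finset.filter_insert, Finset.filter_singleton,
      Finset.filter_singleton]
    simp [hx, hy]
  · have hy : Even (content y) := by tauto
    rw [Finset.filter_insert, Finset.filter_insert, Finset.filter_singleton,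
      Finset.filter_singleton]
    simp [hx, hy]

lemma gamma_union (s t : Finset (ℕ × ℕ)) (hdisj : Disjoint s t) :
    (((s ∪ t).filter fun c => Even (content c)).card : ℤ) -
      (((s ∪ t).filter fun c => ¬ Even (content c)).card : ℤ)
    = (((s.filter fun c => Even (content c)).card : ℤ) -
        ((s.filter fun c => ¬ Even (content c)).card : ℤ))
      + (((t.filter fun c => Even (content c)).card : ℤ) -
        ((t.filter fun c => ¬ Even (content c)).card : ℤ)) := by
  rw [Finset.filter_union, Finset.filter_union,
    Finset.card_union_of_disjoint (Finset.disjoint_filter_filter hdisj),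
    Finset.card_union_of_disjoint (Finset.disjoint_filter_filter hdisj)]
  push_cast
  ring

lemma gamma_addDomino {μ lam : YoungDiagram} (h : AddDomino μ lam) :
    gamma lam = gamma μ := by
  obtain ⟨hsub, i, j, hd⟩ := h
  have hunion : μ.cells ∪ (lam.cells \ μ.cells) = lam.cells :=
    Finset.union_sdiff_of_subset hsub
  have hdisj : Disjoint μ.cells (lam.cells \ μ.cells) := Finset.disjoint_sdiff
  have h1 : ((lam.cells \ μ.cells).filter fun c => Even (content c)).card = 1 ∧
      ((lam.cells \ μ.cells).filter fun c => ¬ Even (content c)).card = 1 := by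
    rcases hd with hd | hd <;> rw [hd]
    · exact filter_pair_card _ _ (by simp [content, Int.even_iff]; omega)
    · exact filter_pair_card _ _ (by simp [content, Int.even_iff]; omega)
  unfold gamma
  rw [← hunion, gamma_union _ _ hdisj, h1.1, h1.2]
  simp

lemma gamma_dominoEquiv {μ lam : YoungDiagram} (h : DominoEquiv μ lam) :
    gamma μ = gamma lam := by
  induction h with
  | rel _ _ h => exact (gamma_addDomino h).symm
  | refl => rfl
  | symm _ _ _ ih => exact ih.symm
  | trans _ _ _ _ _ ih1 ih2 => exact ih1.trans ih2

def diag (m : ℕ) : Finset (ℕ × ℕ) :=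
  (Finset.range (m+1)).image fun i => (i, m - i)

lemma mem_diag {m : ℕ} {c : ℕ × ℕ} : c ∈ diag m ↔ c.1 + c.2 = m := by
  obtain ⟨i, j⟩ := c
  simp only [diag, Finset.mem_image, Finset.mem_range, Prod.mk.injEq]
  constructor
  · rintro ⟨k, hk, rfl, rfl⟩; omega
  · rintro h; exact ⟨i, by omega, rfl, by omega⟩

lemma staircase_succ_cells (m : ℕ) :
    (staircase (m+1)).cells = (staircase m).cells ∪ diag m := by
  ext ⟨i, j⟩
  simp only [staircase, Finset.mem_filter, Finset.mem_product, Finset.mem_range,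
    Finset.mem_union, mem_diag]
  omega

lemma card_diag (m : ℕ) : (diag m).card = m + 1 := by
  rw [diag, Finset.card_image_of_injective _ (fun a b h => (Prod.mk.injEq .. ▸ h).1),
    Finset.card_range]

lemma diag_even {m : ℕ} {c : ℕ × ℕ} (hc : c ∈ diag m) :
    Even (content c) ↔ Even m := by
  rw [mem_diag] at hc
  rw [content, Int.even_iff, Nat.even_iff]
  omega

lemma diag_filter (m : ℕ) :
    (((diag m).filter fun c => Even (content c)).card : ℤ)
      - (((diag m).filter fun c => ¬ Even (content c)).card : ℤ)
      = if Even m then ((m : ℤ) + 1) else -((m : ℤ) + 1) := by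
  by_cases he : Even m
  · rw [if_pos he, Finset.filter_true_of_mem (fun c hc => (diag_even hc).mpr he),
      Finset.filter_false_of_mem (fun c hc => by simp [diag_even hc, he]), card_diag]
    simp
  · rw [if_neg he, Finset.filter_false_of_mem (fun c hc => by simp [diag_even hc, he]),
      Finset.filter_true_of_mem (fun c hc => by simp [diag_even hc, he]), card_diag]
    simp

lemma gamma_staircase_succ (m : ℕ) :
    gamma (staircase (m+1))
      = gamma (staircase m) + (if Even m then ((m : ℤ) + 1) else -((m : ℤ) + 1)) := by
  have hdisj : Disjoint (staircase m).cells (diag m) := by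
    rw [Finset.disjoint_left]
    intro c hc hd
    rw [mem_diag] at hd
    simp only [staircase, Finset.mem_filter] at hc
    omega
  unfold gamma
  rw [staircase_succ_cells, gamma_union _ _ hdisj, diag_filter]

def g (m : ℕ) : ℤ := if Even m then -((m : ℤ) / 2) else ((m : ℤ) + 1) / 2

lemma gamma_staircase (m : ℕ) : gamma (staircase m) = g m := by
  induction m with
  | zero => simp [gamma, staircase, g]
  | succ n ih =>
    rw [gamma_staircase_succ, ih]
    unfold g
    rcases Nat.even_or_odd n with he | ho
    · have h2 : (n : ℤ) % 2 = 0 := by rcases he with ⟨k, hk⟩; omega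
      rw [if_pos he, if_pos he,
        if_neg (by simp [Nat.even_add_one, he] : ¬ Even (n+1))]
      push_cast
      omega
    · have h2 : (n : ℤ) % 2 = 1 := by rcases ho with ⟨k, hk⟩; omega
      have hne : ¬ Even n := by simp [Nat.even_iff, Nat.odd_iff.mp ho]
      rw [if_neg hne, if_neg hne,
        if_pos (by simp [Nat.even_add_one, hne] : Even (n+1))]
      push_cast
      omega

/-- Two staircase Young diagrams that are domino-equivalent are equal: distinct
2-cores are not domino-equivalent. -/
theorem statement3 (a b : ℕ) (h : DominoEquiv (staircase a) (staircase b)) :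
    a = b := by
  have := gamma_dominoEquiv h
  rw [gamma_staircase, gamma_staircase] at this
  unfold g at this
  rcases Nat.even_or_odd a with ha | ha <;> rcases Nat.even_or_odd b with hb | hb
  all_goals
    first
      | (rw [if_pos ha] at this) | (rw [if_neg (by simp [Nat.even_iff, Nat.odd_iff.mp ha])] at this)
  all_goals
    first
      | (rw [if_pos hb] at this) | (rw [if_neg (by simp [Nat.even_iff, Nat.odd_iff.mp hb])] at this)
  all_goals
    rcases ha with ⟨k, hk⟩ <;> rcases hb with ⟨l, hl⟩ <;> omega

end PeriplecticPaper
end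

section
/- Let k be a field with char k = 2. The periplectic Brauer algebra A₂ over k is isomorphic as a k-algebra to k[x, y]/(x², xy, y²), the quotient of the polynomial ring in two commuting variables x, y over k by the ideal generated by x², xy and y². -/
/-!
In characteristic 2 the relation `ε·s = -ε` reads `ε·s = ε = s·ε`, so the generators commute
and `A₂` is commutative. Put `x = s + 1` and `y = ε`: then `x² = s² + 2s + 1 = 0`,
`x·y = s·ε + ε = 2ε = 0` and `y² = 0`, and conversely `s = x + 1`, `ε = y` satisfy the defining
relations of `A₂` in `k[x, y]/(x², x·y, y²)`. The two assignments are mutually inverse.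
-/

namespace PeriplecticPaper

/-- The two generators `s` and `ε` of the periplectic Brauer algebra `A₂`. -/
inductive PBGen : Type
  | s
  | e

open FreeAlgebra

/-- The defining relations of the periplectic Brauer algebra `A₂`:
`s² = 1`, `ε² = 0`, `s·ε = ε` and `ε·s = -ε`.  Taking the ring quotient by this
relation is the quotient of the free algebra on `s, ε` by the two-sided ideal
generated by `s² - 1`, `ε²`, `s·ε - ε` and `ε·s + ε`. -/
inductive A2Rel (k : Type) [Field k] :
    FreeAlgebra k PBGen → FreeAlgebra k PBGen → Prop
  | ss : A2Rel k (ι k PBGen.s * ι k PBGen.s) 1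
  | ee : A2Rel k (ι k PBGen.e * ι k PBGen.e) 0
  | se : A2Rel k (ι k PBGen.s * ι k PBGen.e) (ι k PBGen.e)
  | es : A2Rel k (ι k PBGen.e * ι k PBGen.s) (-(ι k PBGen.e))

/-- The periplectic Brauer algebra `A₂` over the field `k`:  the quotient of the free
associative unital `k`-algebra on generators `s, ε` by the two-sided ideal generated by
`s² - 1`, `ε²`, `s·ε - ε` and `ε·s + ε`. -/
abbrev A2 (k : Type) [Field k] : Type := RingQuot (A2Rel k)

/-- The image in `A₂` of the generator `s`. -/
noncomputable def sBar (k : Type) [Field k] : A2 k :=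
  RingQuot.mkAlgHom k (A2Rel k) (ι k PBGen.s)

/-- The image in `A₂` of the generator `ε`. -/
noncomputable def eBar (k : Type) [Field k] : A2 k :=
  RingQuot.mkAlgHom k (A2Rel k) (ι k PBGen.e)

open MvPolynomial

section Generators

variable {k : Type} [Field k]

theorem sBar_mul_sBar : sBar k * sBar k = 1 := by
  simpa only [sBar, map_mul, map_one] using RingQuot.mkAlgHom_rel k (A2Rel.ss (k := k))

theorem eBar_mul_eBar : eBar k * eBar k = 0 := by
  simpa only [eBar, map_mul, map_zero] using RingQuot.mkAlgHom_rel k (A2Rel.ee (k := k))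

theorem sBar_mul_eBar : sBar k * eBar k = eBar k := by
  simpa only [sBar, eBar, map_mul] using RingQuot.mkAlgHom_rel k (A2Rel.se (k := k))

theorem eBar_mul_sBar : eBar k * sBar k = -eBar k := by
  simpa only [sBar, eBar, map_mul, map_neg] using RingQuot.mkAlgHom_rel k (A2Rel.es (k := k))

theorem adjoin_sBar_eBar : Algebra.adjoin k {sBar k, eBar k} = ⊤ := by
  have hgens : RingQuot.mkAlgHom k (A2Rel k) '' Set.range (ι k) = {sBar k, eBar k} := by
    rw [← Set.range_comp]
    ext x
    constructor
    · rintro ⟨(_ | _), rfl⟩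
      exacts [Or.inl rfl, Or.inr rfl]
    · rintro (rfl | rfl)
      exacts [⟨PBGen.s, rfl⟩, ⟨PBGen.e, rfl⟩]
  rw [← hgens, Algebra.adjoin_image, adjoin_range_ι, Algebra.map_top, AlgHom.range_eq_top]
  exact RingQuot.mkAlgHom_surjective k _

noncomputable def A2.lift {B : Type*} [Ring B] [Algebra k B] (s e : B) (hss : s * s = 1)
    (hee : e * e = 0) (hse : s * e = e) (hes : e * s = -e) : A2 k →ₐ[k] B :=
  RingQuot.liftAlgHom k ⟨FreeAlgebra.lift k fun | .s => s | .e => e, by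
    rintro _ _ ⟨⟩ <;> simp only [map_mul, map_one, map_zero, map_neg, lift_ι_apply] <;>
      assumption⟩

section Lift

variable {B : Type*} [Ring B] [Algebra k B] {s e : B} (hss : s * s = 1) (hee : e * e = 0)
  (hse : s * e = e) (hes : e * s = -e)

@[simp]
theorem A2.lift_sBar : A2.lift s e hss hee hse hes (sBar k) = s := by
  simp [A2.lift, sBar]

@[simp]
theorem A2.lift_eBar : A2.lift s e hss hee hse hes (eBar k) = e := by
  simp [A2.lift, eBar]

end Lift

theorem A2.algHom_ext {B : Type*} [Semiring B] [Algebra k B] {f g : A2 k →ₐ[k] B}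
    (hs : f (sBar k) = g (sBar k)) (he : f (eBar k) = g (eBar k)) : f = g :=
  RingQuot.ringQuot_ext' k _ _ <| FreeAlgebra.hom_ext <| funext fun
    | .s => hs
    | .e => he

end Generators

abbrev PolyModDegTwo (R : Type*) [CommRing R] : Type _ :=
  MvPolynomial (Fin 2) R ⧸ Ideal.span {(X 0 : MvPolynomial (Fin 2) R) ^ 2, X 0 * X 1, X 1 ^ 2}

namespace PolyModDegTwo

variable {R : Type*} [CommRing R]

noncomputable def x : PolyModDegTwo R := Ideal.Quotient.mk _ (X 0)

noncomputable def y : PolyModDegTwo R := Ideal.Quotient.mk _ (X 1)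

theorem x_mul_x : (x * x : PolyModDegTwo R) = 0 := by
  rw [x, ← map_mul, Ideal.Quotient.eq_zero_iff_mem, ← sq]
  exact Ideal.subset_span (by simp)

theorem x_mul_y : (x * y : PolyModDegTwo R) = 0 := by
  rw [x, y, ← map_mul, Ideal.Quotient.eq_zero_iff_mem]
  exact Ideal.subset_span (by simp)

theorem y_mul_y : (y * y : PolyModDegTwo R) = 0 := by
  rw [y, ← map_mul, Ideal.Quotient.eq_zero_iff_mem, ← sq]
  exact Ideal.subset_span (by simp)

variable (R) in
noncomputable def lift {B : Type*} [CommRing B] [Algebra R B] (a b : B) (haa : a * a = 0)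
    (hab : a * b = 0) (hbb : b * b = 0) : PolyModDegTwo R →ₐ[R] B :=
  Ideal.Quotient.liftₐ _ (aeval ![a, b]) fun p hp => by
    refine (Ideal.span_le (I := RingHom.ker (aeval (R := R) ![a, b]))).2 ?_ hp
    rintro _ (rfl | rfl | rfl) <;> simp [sq, haa, hab, hbb]

section Lift

variable {B : Type*} [CommRing B] [Algebra R B] {a b : B} (haa : a * a = 0)
  (hab : a * b = 0) (hbb : b * b = 0)

@[simp]
theorem lift_x : lift R a b haa hab hbb x = a := by
  show aeval ![a, b] (X 0) = a
  simp

@[simp]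
theorem lift_y : lift R a b haa hab hbb y = b := by
  show aeval ![a, b] (X 1) = b
  simp

end Lift

theorem algHom_ext {B : Type*} [Semiring B] [Algebra R B] {f g : PolyModDegTwo R →ₐ[R] B}
    (hx : f x = g x) (hy : f y = g y) : f = g :=
  Ideal.Quotient.algHom_ext _ <| MvPolynomial.algHom_ext fun
    | 0 => hx
    | 1 => hy

end PolyModDegTwo

theorem add_self_eq_zero_of_charP_two (R : Type*) {M : Type*} [Ring R] [CharP R 2]
    [AddCommGroup M] [Module R M] (m : M) : m + m = 0 := by
  rw [← two_smul R m, CharTwo.two_eq_zero, zero_smul]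

section CharTwo

variable {k : Type} [Field k] [CharP k 2]

theorem eBar_mul_sBar_of_charTwo : eBar k * sBar k = eBar k := by
  rw [eBar_mul_sBar, neg_eq_of_add_eq_zero_left (add_self_eq_zero_of_charP_two k _)]

theorem A2.mul_comm_of_charTwo (a b : A2 k) : a * b = b * a := by
  have hgens : ∀ c ∈ ({sBar k, eBar k} : Set (A2 k)), ∀ d ∈ ({sBar k, eBar k} : Set (A2 k)),
      Commute c d := by
    have hse : Commute (sBar k) (eBar k) := by
      rw [commute_iff_eq, sBar_mul_eBar, eBar_mul_sBar_of_charTwo]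
    rintro c (rfl | rfl) d (rfl | rfl)
    exacts [Commute.refl _, hse, hse.symm, Commute.refl _]
  have hmem (c : A2 k) : c ∈ Algebra.adjoin k {sBar k, eBar k} := by
    rw [adjoin_sBar_eBar]; trivial
  exact Algebra.commute_of_mem_adjoin_of_forall_mem_commute (hmem b) fun d hd =>
    (Algebra.commute_of_mem_adjoin_of_forall_mem_commute (hmem a) (hgens d hd)).symm

abbrev A2.commRingOfCharTwo : CommRing (A2 k) :=
  { (inferInstance : Ring (A2 k)) with mul_comm := A2.mul_comm_of_charTwo (k := k) }

variable (k) in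
noncomputable def A2.toPolyModDegTwo : A2 k →ₐ[k] PolyModDegTwo k :=
  open PolyModDegTwo in
  A2.lift (x + 1 : PolyModDegTwo k) y
    (by linear_combination x_mul_x (R := k) + add_self_eq_zero_of_charP_two k (x (R := k)))
    y_mul_y
    (by linear_combination x_mul_y (R := k))
    (by linear_combination x_mul_y (R := k) + add_self_eq_zero_of_charP_two k (y (R := k)))

variable (k) in
noncomputable def A2.ofPolyModDegTwo : PolyModDegTwo k →ₐ[k] A2 k :=
  letI := A2.commRingOfCharTwo (k := k)
  PolyModDegTwo.lift k (sBar k + 1) (eBar k)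
    (by linear_combination sBar_mul_sBar (k := k) + add_self_eq_zero_of_charP_two k (sBar k)
      + add_self_eq_zero_of_charP_two k (1 : A2 k))
    (by linear_combination sBar_mul_eBar (k := k) + add_self_eq_zero_of_charP_two k (eBar k))
    eBar_mul_eBar

@[simp]
theorem A2.toPolyModDegTwo_sBar : A2.toPolyModDegTwo k (sBar k) = PolyModDegTwo.x + 1 :=
  A2.lift_sBar ..

@[simp]
theorem A2.toPolyModDegTwo_eBar : A2.toPolyModDegTwo k (eBar k) = PolyModDegTwo.y :=
  A2.lift_eBar ..

@[simp]
theorem A2.ofPolyModDegTwo_x : A2.ofPolyModDegTwo k PolyModDegTwo.x = sBar k + 1 :=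
  letI := A2.commRingOfCharTwo (k := k)
  PolyModDegTwo.lift_x ..

@[simp]
theorem A2.ofPolyModDegTwo_y : A2.ofPolyModDegTwo k PolyModDegTwo.y = eBar k :=
  letI := A2.commRingOfCharTwo (k := k)
  PolyModDegTwo.lift_y ..

variable (k) in
noncomputable def A2.equivPolyModDegTwo : A2 k ≃ₐ[k] PolyModDegTwo k :=
  AlgEquiv.ofAlgHom (A2.toPolyModDegTwo k) (A2.ofPolyModDegTwo k)
    (PolyModDegTwo.algHom_ext (by simp [add_assoc, add_self_eq_zero_of_charP_two k]) (by simp))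
    (A2.algHom_ext (by simp [add_assoc, add_self_eq_zero_of_charP_two k]) (by simp))

end CharTwo

open MvPolynomial in
/-- If `char k = 2`, the periplectic Brauer algebra `A₂` over `k` is isomorphic as a
`k`-algebra to `k[x, y]/(x², x·y, y²)`. -/
theorem statement8 (k : Type) [Field k] [CharP k 2] :
    Nonempty (A2 k ≃ₐ[k]
      (MvPolynomial (Fin 2) k ⧸
        Ideal.span {(X 0 : MvPolynomial (Fin 2) k) ^ 2, X 0 * X 1, X 1 ^ 2})) :=
  ⟨A2.equivPolyModDegTwo k⟩

end PeriplecticPaper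
end
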